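/- arXiv:2208.01310 — 2 statements merged into one kernel-verified Lean document; each statement's English description precedes it below -/
import Mathlib

section
/- Every quantum automorphism of the infinite line graph L (vertex set Z, edges between consecutive integers) is classical: for any quantum automorphism (H, u) of L, all projections u_{ij}, i,j ∈ Z, pairwise commute. -/
noncomputable section

def IsProjection {H : Type*} [NormedAddCommGroup H] [InnerProductSpace ℂ H] [CompleteSpace H]
    (p : H →L[ℂ] H) : Prop :=
  IsIdempotentElem p ∧ IsSelfAdjoint p

def IsQuantumPermutation {X H : Type*} [NormedAddCommGroup H] [InnerProductSpace ℂ H]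
    [CompleteSpace H] (u : X → X → H →L[ℂ] H) : Prop :=
  (∀ x y, IsProjection (u x y)) ∧
  (∀ x z z', z ≠ z' → u x z * u x z' = 0) ∧
  (∀ y z z', z ≠ z' → u z y * u z' y = 0) ∧
  (∀ x (ξ : H), HasSum (fun z => u x z ξ) ξ) ∧
  (∀ y (ξ : H), HasSum (fun z => u z y ξ) ξ)

/-- The 'infinite line' graph `L`: vertex set `ℤ`, edges between `i` and `j` iff `|i−j| = 1`. -/
def lineGraph : SimpleGraph ℤ where
  Adj i j := |i - j| = 1
  symm := ⟨fun i j h => by simpa [abs_sub_comm] using h⟩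
  loopless := ⟨fun i h => by simp at h⟩

def IsQuantumAut {V H : Type*} [NormedAddCommGroup H] [InnerProductSpace ℂ H]
    [CompleteSpace H] (G : SimpleGraph V) (u : V → V → H →L[ℂ] H) : Prop :=
  IsQuantumPermutation u ∧
  ∀ x₁ x₂ y₁ y₂, ¬((x₁ = x₂ ↔ y₁ = y₂) ∧ (G.Adj x₁ x₂ ↔ G.Adj y₁ y₂)) →
    u x₁ y₁ * u x₂ y₂ = 0


/-! Quantum automorphisms of any graph preserve the path metric: `u x₁ y₁ * u x₂ y₂ = 0` unless
`d(x₁, x₂) = d(y₁, y₂)`. Inserting the row `∑ₘ u x' m = 1` of a neighbour `x'` of `x₁` between the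
two factors reduces to a pair whose `x`-distance is one smaller and whose `y`-distance dropped by at
most one; the transposed matrix handles the other inequality.

In the line graph the only columns at distance `|j - l| > 0` from `l` are `j` and `j' = 2l - j`, so
row `i` gives `(u i j + u i j') * u k l = u k l`, and expanding `u i j'` along row `k` in the same
way shows `u i j * u k l * u i j' = 0`. For self-adjoint `p, q, w` these two relations force
`p * w = p * w * p = w * p`. -/

section ResolutionOfIdentity

variable {ι R M : Type*} [Semiring R] [AddCommMonoid M] [TopologicalSpace M] [T2Space M]
  [Module R M] {p : ι → M →L[R] M}

theorem ContinuousLinearMap.mul_eq_zero_of_hasSum (hp : ∀ ξ, HasSum (fun m ↦ p m ξ) ξ)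
    {A B : M →L[R] M} (h : ∀ m, A * p m = 0 ∨ p m * B = 0) : A * B = 0 := by
  ext ξ
  have hterm : ∀ m, A (p m (B ξ)) = 0 := fun m ↦ by
    rcases h m with h | h
    · exact congrArg (· (B ξ)) h
    · simpa using congrArg (A <| · ξ) h
  have hs : HasSum (fun _ : ι ↦ (0 : M)) (A (B ξ)) := by
    simpa only [hterm] using A.hasSum (hp (B ξ))
  exact hs.unique hasSum_zero

theorem ContinuousLinearMap.sum_mul_eq_self_of_hasSum [ContinuousAdd M]
    (hp : ∀ ξ, HasSum (fun m ↦ p m ξ) ξ) {T : M →L[R] M} {s : Finset ι}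
    (h : ∀ m ∉ s, p m * T = 0) : ∑ m ∈ s, p m * T = T := by
  ext ξ
  have hs : HasSum (fun m ↦ p m (T ξ)) (∑ m ∈ s, p m (T ξ)) :=
    hasSum_sum_of_ne_finset_zero fun m hm ↦ congrArg (· ξ) (h m hm)
  simpa using hs.unique (hp (T ξ))

end ResolutionOfIdentity

theorem commute_of_add_mul_eq_self {R : Type*} [NonUnitalSemiring R] [StarRing R] {p q w : R}
    (hp : IsSelfAdjoint p) (hq : IsSelfAdjoint q) (hw : IsSelfAdjoint w)
    (hsum : (p + q) * w = w) (hpwq : p * w * q = 0) : Commute p w := by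
  have hsum' : w * (p + q) = w := by
    simpa [hp.star_eq, hq.star_eq, hw.star_eq] using congrArg star hsum
  have hqwp : q * w * p = 0 := by
    simpa [mul_assoc, hp.star_eq, hq.star_eq, hw.star_eq] using congrArg star hpwq
  calc p * w = p * (w * (p + q)) := by rw [hsum']
    _ = p * w * p := by rw [mul_add, mul_add, ← mul_assoc, ← mul_assoc, hpwq, add_zero]
    _ = (p + q) * w * p := by rw [add_mul, add_mul, hqwp, add_zero]
    _ = w * p := by rw [hsum]

section QuantumAut

variable {V H : Type*} [NormedAddCommGroup H] [InnerProductSpace ℂ H] [CompleteSpace H]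
  {u : V → V → H →L[ℂ] H}

theorem IsQuantumPermutation.transpose (hu : IsQuantumPermutation u) :
    IsQuantumPermutation fun x y ↦ u y x :=
  let ⟨hproj, hrow, hcol, hsum_row, hsum_col⟩ := hu
  ⟨fun x y ↦ hproj y x, hcol, hrow, hsum_col, hsum_row⟩

namespace IsQuantumAut

variable {G : SimpleGraph V}

theorem transpose (hu : IsQuantumAut G u) : IsQuantumAut G fun x y ↦ u y x :=
  ⟨hu.1.transpose, fun x₁ x₂ y₁ y₂ h ↦
    hu.2 y₁ y₂ x₁ x₂ fun ⟨h₁, h₂⟩ ↦ h ⟨h₁.symm, h₂.symm⟩⟩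

theorem mul_eq_zero_of_length_lt (hu : IsQuantumAut G u) {x₁ x₂ : V} (w : G.Walk x₁ x₂)
    {y₁ y₂ : V} (h : w.length < G.edist y₁ y₂) : u x₁ y₁ * u x₂ y₂ = 0 := by
  obtain ⟨⟨-, hrow, -, hsum_row, -⟩, hadj⟩ := hu
  induction w generalizing y₁ with
  | nil => exact hrow _ _ _ fun hy ↦ by simp [hy] at h
  | @cons x₁ x' x₂ hx w ih =>
    refine ContinuousLinearMap.mul_eq_zero_of_hasSum (hsum_row x') fun m ↦ ?_
    by_cases hy : G.Adj y₁ m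
    · refine .inr (ih ?_)
      by_contra! hle
      refine h.not_ge ?_
      calc G.edist y₁ y₂ ≤ G.edist y₁ m + G.edist m y₂ := G.edist_triangle
        _ ≤ 1 + w.length := add_le_add (G.edist_eq_one_iff_adj.mpr hy).le hle
        _ = (w.cons hx).length := by simp [add_comm]
    · exact .inl (hadj _ _ _ _ fun ⟨_, hxy⟩ ↦ hy (hxy.mp hx))

theorem mul_eq_zero_of_edist_lt (hu : IsQuantumAut G u) {x₁ x₂ y₁ y₂ : V}
    (h : G.edist x₁ x₂ < G.edist y₁ y₂) : u x₁ y₁ * u x₂ y₂ = 0 := by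
  obtain ⟨w, hw⟩ := SimpleGraph.exists_walk_of_edist_ne_top h.ne_top
  exact hu.mul_eq_zero_of_length_lt w (hw ▸ h)

theorem mul_eq_zero_of_edist_ne (hu : IsQuantumAut G u) {x₁ x₂ y₁ y₂ : V}
    (h : G.edist x₁ x₂ ≠ G.edist y₁ y₂) : u x₁ y₁ * u x₂ y₂ = 0 :=
  h.lt_or_gt.elim hu.mul_eq_zero_of_edist_lt hu.transpose.mul_eq_zero_of_edist_lt

end IsQuantumAut

end QuantumAut

theorem lineGraph_adj_iff {i j : ℤ} : lineGraph.Adj i j ↔ (i - j).natAbs = 1 := by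
  change |i - j| = 1 ↔ _
  rw [Int.abs_eq_natAbs]
  omega

theorem lineGraph_edist_add_le (i : ℤ) (n : ℕ) : lineGraph.edist i (i + n) ≤ n := by
  induction n with
  | zero => simp
  | succ n ih =>
    calc lineGraph.edist i (i + ↑(n + 1))
        ≤ lineGraph.edist i (i + n) + lineGraph.edist (i + n) (i + ↑(n + 1)) :=
          lineGraph.edist_triangle
      _ ≤ n + 1 := by
          refine add_le_add ih (SimpleGraph.edist_eq_one_iff_adj.mpr ?_).le
          exact lineGraph_adj_iff.mpr (by omega)

theorem lineGraph_edist_le (i j : ℤ) : lineGraph.edist i j ≤ (i - j).natAbs := by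
  wlog hij : i ≤ j generalizing i j
  · rw [SimpleGraph.edist_comm, show (i - j).natAbs = (j - i).natAbs by omega]
    exact this j i (by omega)
  obtain ⟨n, rfl⟩ := Int.le.dest hij
  simpa [show (i - (i + n)).natAbs = n by omega] using lineGraph_edist_add_le i n

theorem lineGraph_natAbs_sub_le_length {i j : ℤ} (w : lineGraph.Walk i j) :
    (i - j).natAbs ≤ w.length := by
  induction w with
  | nil => simp
  | cons hadj w ih =>
    rw [SimpleGraph.Walk.length_cons]
    have := lineGraph_adj_iff.mp hadj
    omega

theorem lineGraph_edist (i j : ℤ) : lineGraph.edist i j = (i - j).natAbs := by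
  obtain ⟨w, hw⟩ :=
    SimpleGraph.exists_walk_of_edist_ne_top ((lineGraph_edist_le i j).trans_lt (by simp)).ne
  exact (lineGraph_edist_le i j).antisymm
    (hw ▸ Nat.cast_le.mpr (lineGraph_natAbs_sub_le_length w))

namespace IsQuantumAut

variable {H : Type*} [NormedAddCommGroup H] [InnerProductSpace ℂ H] [CompleteSpace H]
  {u : ℤ → ℤ → H →L[ℂ] H}

theorem lineGraph_mul_eq_zero (hu : IsQuantumAut lineGraph u) {i j k l : ℤ}
    (h : (i - k).natAbs ≠ (j - l).natAbs) : u i j * u k l = 0 :=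
  hu.mul_eq_zero_of_edist_ne (by simpa [lineGraph_edist] using h)

theorem lineGraph_commute (hu : IsQuantumAut lineGraph u) {i j k l : ℤ} (hik : i ≠ k)
    (hd : (i - k).natAbs = (j - l).natAbs) : Commute (u i j) (u k l) := by
  have ⟨⟨hproj, hrow, _, hsum_row, _⟩, _⟩ := hu
  -- `j'` is the other column at distance `|j - l|` from `l`, and `l'` the other one from `j'`.
  set j' := 2 * l - j
  set l' := 3 * l - 2 * j
  have hrow_k : u k l * u i j' + u k l' * u i j' = u i j' := by
    rw [← Finset.sum_pair (f := fun m ↦ u k m * u i j') (show l ≠ l' by omega)]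
    refine ContinuousLinearMap.sum_mul_eq_self_of_hasSum (hsum_row k) fun m hm ↦ ?_
    simp only [Finset.mem_insert, Finset.mem_singleton] at hm
    exact hu.lineGraph_mul_eq_zero (by omega)
  have hrow_i : (u i j + u i j') * u k l = u k l := by
    rw [add_mul, ← Finset.sum_pair (f := fun m ↦ u i m * u k l) (show j ≠ j' by omega)]
    refine ContinuousLinearMap.sum_mul_eq_self_of_hasSum (hsum_row i) fun m hm ↦ ?_
    simp only [Finset.mem_insert, Finset.mem_singleton] at hm
    exact hu.lineGraph_mul_eq_zero (by omega)
  have hpwq : u i j * u k l * u i j' = 0 := by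
    have hjj' : u i j * u i j' = 0 := hrow i j j' (by omega)
    have hjl' : u i j * u k l' = 0 := hu.lineGraph_mul_eq_zero (by omega)
    calc u i j * u k l * u i j'
        = u i j * (u k l * u i j' + u k l' * u i j') := by
          rw [mul_add, ← mul_assoc, ← mul_assoc, hjl', zero_mul, add_zero]
      _ = 0 := by rw [hrow_k, hjj']
  exact commute_of_add_mul_eq_self (hproj i j).2 (hproj i j').2 (hproj k l).2 hrow_i hpwq

end IsQuantumAut

/-- every quantum automorphism of the infinite line graph is classical:
all its entries pairwise commute. -/
theorem stmt13 {H : Type*} [NormedAddCommGroup H] [InnerProductSpace ℂ H] [CompleteSpace H]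
    (u : ℤ → ℤ → H →L[ℂ] H) (hu : IsQuantumAut lineGraph u) :
    ∀ i j k l : ℤ, Commute (u i j) (u k l) := by
  intro i j k l
  by_cases hd : (i - k).natAbs = (j - l).natAbs
  · by_cases hik : i = k
    · obtain rfl := hik
      obtain rfl : j = l := by omega
      exact Commute.refl _
    · exact hu.lineGraph_commute hik hd
  · exact (hu.lineGraph_mul_eq_zero hd).trans (hu.lineGraph_mul_eq_zero (by omega)).symm
end
end

section
/- Let R be a countable graph with the extension property: for any pair of disjoint finite sets A, B of vertices there is a vertex w adjacent to every vertex of A and to no vertex of B (e.g. the Rado graph). Then R admits no non-classical finite dimensional quantum automorphism: for every quantum automorphism (H, u) of R with dim H < ∞, all projections u_{xy} pairwise commute. -/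
/-!
Take `x ≠ z`, `y ≠ w` and write `p = u x y`, `q = u z w`. As `H` is finite dimensional, the
columns `y` and `w` have only finitely many nonzero entries, so the extension property yields a
vertex `c` adjacent to `x` and `z` and to no other vertex carrying a nonzero entry of these
columns. For `E`, the sum of the `u c v` over the `v` adjacent to both `y` and `w`, the relations
of a quantum automorphism give `q E p = q p`, `(u x y + u z y) E = E` and `(u x w + u z w) E = E`;
together these make `p q p = p E p` idempotent. Finally, by the C⋆-identity, two projections
`p`, `q` commute as soon as `p q p` is idempotent.
-/

noncomputable section

section CStarRing

variable {A : Type*} [NonUnitalNormedRing A] [StarRing A] [CStarRing A] {p q : A}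

theorem IsStarProjection.commute_of_isIdempotentElem_mul_mul (hp : IsStarProjection p)
    (hq : IsStarProjection q) (h : IsIdempotentElem (p * q * p)) : Commute p q := by
  have hp2 : ∀ a, p * (p * a) = p * a := fun a => by rw [← mul_assoc, hp.isIdempotentElem.eq]
  have hq2 : ∀ a, q * (q * a) = q * a := fun a => by rw [← mul_assoc, hq.isIdempotentElem.eq]
  have hpqp : p * (q * (p * (q * p))) = p * (q * p) := by
    simpa only [mul_assoc, hp2] using h.eq
  -- `d = q p - p q p` satisfies `d⋆ d = p q p - (p q p)²`.
  have hd : star (q * p - p * q * p) * (q * p - p * q * p) = 0 := by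
    simp only [star_sub, star_mul, hp.isSelfAdjoint.star_eq, hq.isSelfAdjoint.star_eq, sub_mul,
      mul_sub, mul_assoc, hp2, hq2, hpqp, sub_self]
  have hqp : q * p = p * q * p := sub_eq_zero.mp ((CStarRing.star_mul_self_eq_zero_iff _).mp hd)
  have hpq : p * q = p * q * p := by
    simpa only [star_mul, hp.isSelfAdjoint.star_eq, hq.isSelfAdjoint.star_eq, mul_assoc]
      using congr(star $hqp)
  exact hpq.trans hqp.symm

end CStarRing

theorem isIdempotentElem_mul_mul_of_covering {R : Type*} [Ring R] {p p' q q' e : R}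
    (hp : IsIdempotentElem p) (hpq' : p * q' = 0) (hq'p : q' * p = 0) (hqp' : q * p' = 0)
    (hqep : q * e * p = q * p) (hpe : (p + p') * e = e) (hqe : (q' + q) * e = e) :
    IsIdempotentElem (p * q * p) := by
  have hpqe : p * q * e = p * e := calc
    p * q * e = p * q' * e + p * q * e := by rw [hpq', zero_mul, zero_add]
    _ = p * ((q' + q) * e) := by noncomm_ring
    _ = p * e := by rw [hqe]
  have hpqp : p * q * p = p * e * p := calc
    p * q * p = p * (q * e * p) := by rw [hqep, mul_assoc]
    _ = p * q * e * p := by simp only [mul_assoc]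
    _ = p * e * p := by rw [hpqe]
  have hpqpe : p * q * p * e = p * e := calc
    p * q * p * e = p * q' * p' * e + p * q * p * e := by rw [hpq', zero_mul, zero_mul, zero_add]
    _ = p * ((q' + q) * (p + p') * e) := by
      rw [add_mul q', mul_add, mul_add, hq'p, hqp', zero_add, add_zero]; noncomm_ring
    _ = p * e := by rw [mul_assoc, hpe, hqe]
  show p * q * p * (p * q * p) = p * q * p
  calc p * q * p * (p * q * p) = p * q * p * (p * e * p) := by rw [← hpqp]
    _ = p * q * (p * p) * e * p := by simp only [mul_assoc]
    _ = p * e * p := by rw [hp.eq, hpqpe]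
    _ = p * q * p := hpqp.symm

theorem ContinuousLinearMap.finite_setOf_ne_zero_of_pairwise_mul_eq_zero {𝕜 E ι : Type*}
    [RCLike 𝕜] [NormedAddCommGroup E] [InnerProductSpace 𝕜 E] [CompleteSpace E]
    [FiniteDimensional 𝕜 E] {f : ι → E →L[𝕜] E}
    (hf : ∀ i, IsSelfAdjoint (f i)) (horth : Pairwise fun i j => f i * f j = 0) :
    {i | f i ≠ 0}.Finite := by
  have hvec : ∀ i : {i | f i ≠ 0}, ∃ ξ, f i ξ ≠ 0 := fun i => by
    by_contra! h
    exact i.2 (ContinuousLinearMap.ext h)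
  choose ξ hξ using hvec
  have hli : LinearIndependent 𝕜 fun i : {i | f i ≠ 0} => f i (ξ i) :=
    linearIndependent_of_ne_zero_of_inner_eq_zero hξ fun i j hij => by
      calc inner 𝕜 (f i (ξ i)) (f j (ξ j)) = inner 𝕜 (ξ i) ((f i * f j) (ξ j)) :=
            (hf i).isSymmetric _ _
        _ = 0 := by rw [horth (Subtype.coe_ne_coe.mpr hij), zero_apply, inner_zero_right]
  exact Set.finite_coe_iff.mp hli.finite

theorem ContinuousLinearMap.mul_sum_mul_eq_of_hasSum {𝕜 E ι : Type*} [NontriviallyNormedField 𝕜]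
    [NormedAddCommGroup E] [NormedSpace 𝕜 E] {f : ι → E →L[𝕜] E}
    (hf : ∀ ξ, HasSum (fun i => f i ξ) ξ) {s : Finset ι} {a b : E →L[𝕜] E}
    (hs : ∀ i ∉ s, a * f i * b = 0) : a * (∑ i ∈ s, f i) * b = a * b := by
  ext ξ
  have hsum : HasSum (fun i => (a * f i * b) ξ) ((a * b) ξ) := (hf (b ξ)).mapL a
  rw [Finset.mul_sum, Finset.sum_mul, _root_.sum_apply]
  exact (hasSum_sum_of_ne_finset_zero fun i hi => by
    rw [hs i hi, zero_apply]).unique hsum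

section QuantumAut

variable {V H : Type*} [NormedAddCommGroup H] [InnerProductSpace ℂ H] [CompleteSpace H]
  {u : V → V → H →L[ℂ] H}

theorem IsProjection.isStarProjection {p : H →L[ℂ] H} (hp : IsProjection p) :
    IsStarProjection p :=
  ⟨hp.1, hp.2⟩

namespace IsQuantumPermutation

theorem finite_row [FiniteDimensional ℂ H] (hu : IsQuantumPermutation u) (x : V) :
    {y | u x y ≠ 0}.Finite :=
  ContinuousLinearMap.finite_setOf_ne_zero_of_pairwise_mul_eq_zero (fun y => (hu.1 x y).2)
    fun _ _ => hu.2.1 x _ _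

theorem finite_col [FiniteDimensional ℂ H] (hu : IsQuantumPermutation u) (y : V) :
    {x | u x y ≠ 0}.Finite :=
  ContinuousLinearMap.finite_setOf_ne_zero_of_pairwise_mul_eq_zero (fun x => (hu.1 x y).2)
    fun _ _ => hu.2.2.1 y _ _

theorem commute_same_row (hu : IsQuantumPermutation u) (x y w : V) :
    Commute (u x y) (u x w) := by
  obtain rfl | hyw := eq_or_ne y w
  · exact Commute.refl _
  · exact (hu.2.1 x y w hyw).trans (hu.2.1 x w y hyw.symm).symm

theorem commute_same_col (hu : IsQuantumPermutation u) (x z y : V) :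
    Commute (u x y) (u z y) := by
  obtain rfl | hxz := eq_or_ne x z
  · exact Commute.refl _
  · exact (hu.2.2.1 y x z hxz).trans (hu.2.2.1 y z x hxz.symm).symm

end IsQuantumPermutation

namespace IsQuantumAut

variable {G : SimpleGraph V}

theorem mul_eq_zero_of_adj_of_not_adj (hu : IsQuantumAut G u) {x₁ x₂ y₁ y₂ : V}
    (hx : G.Adj x₁ x₂) (hy : ¬G.Adj y₁ y₂) :
    u x₁ y₁ * u x₂ y₂ = 0 :=
  hu.2 _ _ _ _ fun h => hy (h.2.mp hx)

theorem mul_eq_zero_of_not_adj_of_adj (hu : IsQuantumAut G u) {x₁ x₂ y₁ y₂ : V}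
    (hx : ¬G.Adj x₁ x₂) (hy : G.Adj y₁ y₂) :
    u x₁ y₁ * u x₂ y₂ = 0 :=
  hu.2 _ _ _ _ fun h => hx (h.2.mpr hy)

theorem commute_of_extension [FiniteDimensional ℂ H] (hu : IsQuantumAut G u)
    (hext : ∀ A B : Finset V, Disjoint A B → ∃ w : V, w ∉ A ∧ w ∉ B ∧
      (∀ a ∈ A, G.Adj a w) ∧ (∀ b ∈ B, ¬ G.Adj b w))
    {x y z w : V} (hxz : x ≠ z) (hyw : y ≠ w) : Commute (u x y) (u z w) := by
  classical
  obtain ⟨hproj, hrow, -, hrsum, hcsum⟩ := hu.1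
  -- `c` is adjacent to `x` and `z` but to no other vertex of the columns `y` and `w`.
  obtain ⟨c, -, -, hcA, hcB⟩ := hext {x, z}
    (((hu.1.finite_col y).toFinset ∪ (hu.1.finite_col w).toFinset) \ {x, z})
    Finset.disjoint_sdiff
  have hcol (t : V) (ht : t = y ∨ t = w) {a v : V} (ha : a ∉ ({x, z} : Finset V))
      (hv : G.Adj t v) : u a t * u c v = 0 := by
    by_cases hat : u a t = 0
    · rw [hat, zero_mul]
    refine hu.mul_eq_zero_of_not_adj_of_adj (hcB a ?_) hv
    rcases ht with rfl | rfl <;> simp [ha, hat]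
  obtain ⟨T, hT⟩ : ∃ T : Finset V, ∀ v, v ∈ T ↔ u c v ≠ 0 ∧ G.Adj y v ∧ G.Adj w v :=
    ⟨(hu.1.finite_row c).toFinset.filter fun v => G.Adj y v ∧ G.Adj w v, by simp⟩
  have hcover (t : V) (ht : t = y ∨ t = w) (hadj : ∀ v ∈ T, G.Adj t v) :
      (u x t + u z t) * ∑ v ∈ T, u c v = ∑ v ∈ T, u c v := by
    rw [Finset.mul_sum]
    refine Finset.sum_congr rfl fun v hv => ?_
    simpa [Finset.sum_pair hxz] using ContinuousLinearMap.mul_sum_mul_eq_of_hasSum (hcsum t)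
      (a := 1) (s := {x, z}) fun a ha => by rw [one_mul, hcol t ht ha (hadj v hv)]
  have hqEp : u z w * (∑ v ∈ T, u c v) * u x y = u z w * u x y := by
    refine ContinuousLinearMap.mul_sum_mul_eq_of_hasSum (hrsum c) fun v hv => ?_
    by_cases hcv : u c v = 0
    · rw [hcv, mul_zero, zero_mul]
    rcases not_and_or.mp fun h => hv ((hT v).mpr ⟨hcv, h⟩) with hvy | hvw
    · rw [mul_assoc, hu.mul_eq_zero_of_adj_of_not_adj (hcA x (by simp)).symm fun h => hvy h.symm,
        mul_zero]
    · rw [hu.mul_eq_zero_of_adj_of_not_adj (hcA z (by simp)) hvw, zero_mul]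
  refine (hproj x y).isStarProjection.commute_of_isIdempotentElem_mul_mul
    (hproj z w).isStarProjection ?_
  exact isIdempotentElem_mul_mul_of_covering (hproj x y).1 (hrow x y w hyw)
    (hrow x w y hyw.symm) (hrow z w y hyw.symm) hqEp
    (hcover y (.inl rfl) fun v hv => ((hT v).mp hv).2.1)
    (hcover w (.inr rfl) fun v hv => ((hT v).mp hv).2.2)

end IsQuantumAut

end QuantumAut

theorem stmt16_general {V H : Type*} [NormedAddCommGroup H] [InnerProductSpace ℂ H]
    [CompleteSpace H] [FiniteDimensional ℂ H]
    (G : SimpleGraph V)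
    (hext : ∀ A B : Finset V, Disjoint A B → ∃ w : V, w ∉ A ∧ w ∉ B ∧
      (∀ a ∈ A, G.Adj a w) ∧ (∀ b ∈ B, ¬ G.Adj b w))
    (u : V → V → H →L[ℂ] H) (hu : IsQuantumAut G u) :
    ∀ x y z w : V, Commute (u x y) (u z w) := by
  intro x y z w
  obtain rfl | hxz := eq_or_ne x z
  · exact hu.1.commute_same_row x y w
  obtain rfl | hyw := eq_or_ne y w
  · exact hu.1.commute_same_col x z y
  exact hu.commute_of_extension hext hxz hyw

/-- let `R` be a countable graph with the extension property (for all disjoint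
finite sets `A, B` of vertices there is a vertex `w ∉ A ∪ B` adjacent to every vertex of `A`
and to none of `B`), e.g. the Rado graph.  Then every finite dimensional quantum automorphism
of `R` is classical: all its entries pairwise commute. -/
theorem stmt16 {V H : Type*} [Countable V] [NormedAddCommGroup H] [InnerProductSpace ℂ H]
    [CompleteSpace H] [FiniteDimensional ℂ H]
    (G : SimpleGraph V)
    (hext : ∀ A B : Finset V, Disjoint A B → ∃ w : V, w ∉ A ∧ w ∉ B ∧
      (∀ a ∈ A, G.Adj a w) ∧ (∀ b ∈ B, ¬ G.Adj b w))
    (u : V → V → H →L[ℂ] H) (hu : IsQuantumAut G u) :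
    ∀ x y z w : V, Commute (u x y) (u z w) :=
  stmt16_general G hext u hu
end
end
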